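/- Let f: ℝ → ℂ be integrable with integrable derivative f'. For y_o ∈ ℝ and k > 0 define δF̌_{y_o}(−k) = F̌_{y_o}(−k) − F̌^Th_{y_o}(−k), where F̌_{y_o}(−k) = (2π)^{−1/2} ∫_ℝ f(y − y_o) e^{i k x(y)} dy and F̌^Th_{y_o}(−k) = (2π)^{−1/2} ∫_ℝ f(y − y_o) e^{i k x_Th(y)} dy. Then for every k > 0: √(2π) |δF̌_{y_o}(−k)| ≤ (1/√k + 1/k) (‖f‖_{L¹} + ‖f'‖_{L¹}). -/

import Mathlib

open MeasureTheory Real Filter Set Topology ComplexConjugate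
open scoped ENNReal NNReal

noncomputable section

/-- CGHS transformation `x(y) = -log(1 + e^{-y})`. -/
def xC (y : ℝ) : ℝ := -Real.log (1 + Real.exp (-y))

/-- Thermal transformation `x_Th(y) = -e^{-y}`. -/
def xT (y : ℝ) : ℝ := -Real.exp (-y)

/-- Incoming Fourier transform at momentum `-k` w.r.t. the transformation `x`:
`(2π)^{-1/2} ∫ f(y) e^{i k x(y)} dy`. -/
def FcheckX (x : ℝ → ℝ) (f : ℝ → ℂ) (k : ℝ) : ℂ :=
  (Real.sqrt (2 * π) : ℂ)⁻¹ * ∫ y : ℝ, f y * Complex.exp (Complex.I * (k : ℂ) * (x y : ℂ))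

/-- Fourier transform `f̂(p) = (2π)^{-1/2} ∫ f(y) e^{-ipy} dy`. -/
def FT (f : ℝ → ℂ) (p : ℝ) : ℂ :=
  (Real.sqrt (2 * π) : ℂ)⁻¹ * ∫ y : ℝ, f y * Complex.exp (-(Complex.I * (p : ℂ) * (y : ℂ)))

/-- Mean number of spontaneously created particles `N[f] = ∫₀^∞ |F̌(-k)|²/(2k) dk`. -/
def Nbar (f : ℝ → ℂ) : ℝ≥0∞ :=
  ∫⁻ k in Set.Ioi (0:ℝ), ENNReal.ofReal (‖FcheckX xC f k‖ ^ 2 / (2 * k))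

/-- Thermal average at inverse temperature `2π`:
`N^Th_{2π}[f] = ∫₀^∞ (|f̂(p)|²/(2p)) (e^{2πp} - 1)⁻¹ dp`. -/
def NTh (f : ℝ → ℂ) : ℝ≥0∞ :=
  ∫⁻ p in Set.Ioi (0:ℝ), ENNReal.ofReal (‖FT f p‖ ^ 2 / (2 * p) / (Real.exp (2 * π * p) - 1))

/-- Translate of `f` by `y₀`: `f_{y₀}(y) = f(y - y₀)`. -/
def transl (f : ℝ → ℂ) (y₀ : ℝ) : ℝ → ℂ := fun y => f (y - y₀)

/-! ### Auxiliary lemmas -/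

/-- Quadratic lower bound for `log (1+u)`. -/
lemma my_quad_log (u : ℝ) (hu : 0 ≤ u) : u - u ^ 2 / 2 ≤ Real.log (1 + u) := by
  have key : MonotoneOn (fun u : ℝ => Real.log (1 + u) - u + u ^ 2 / 2) (Ici 0) := by
    have hd : ∀ x : ℝ, 0 ≤ x →
        HasDerivAt (fun u : ℝ => Real.log (1 + u) - u + u ^ 2 / 2) (1 / (1 + x) - 1 + x) x := by
      intro x hx
      have h1 : HasDerivAt (fun u : ℝ => 1 + u) 1 x := (hasDerivAt_id x).const_add 1
      have h2 : HasDerivAt (fun u : ℝ => Real.log (1 + u)) (1 / (1 + x)) x :=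
        h1.log (by positivity)
      have h3 : HasDerivAt (fun u : ℝ => u ^ 2 / 2) (x) x := by
        have := (hasDerivAt_pow 2 x).div_const 2
        simpa using this
      exact (h2.sub (hasDerivAt_id' x)).add h3
    apply monotoneOn_of_deriv_nonneg (convex_Ici 0)
    · exact fun x hx => ((hd x hx).continuousAt.continuousWithinAt)
    · intro x hx
      rw [interior_Ici] at hx
      exact (hd x hx.le).differentiableAt.differentiableWithinAt
    · intro x hx
      rw [interior_Ici] at hx
      rw [(hd x hx.le).deriv]
      have hx0 : (0:ℝ) < x := hx.out
      have h1x : (0:ℝ) < 1 + x := by linarith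
      have heq : 1 / (1 + x) - 1 + x = x ^ 2 / (1 + x) := by field_simp; ring
      rw [heq]; positivity
  have h0 : (0:ℝ) ∈ Ici (0:ℝ) := Set.mem_Ici.mpr le_rfl
  have := key h0 (show u ∈ Ici (0:ℝ) from hu) hu
  simp only [Real.log_one, add_zero] at this
  nlinarith [this]

/-- Lipschitz bound for the imaginary exponential. -/
lemma my_norm_expI_sub (s t : ℝ) :
    ‖Complex.exp (Complex.I * s) - Complex.exp (Complex.I * t)‖ ≤ |s - t| := by
  have hder : ∀ x : ℝ, HasDerivAt (fun u : ℝ => Complex.exp (Complex.I * u))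
      (Complex.exp (Complex.I * x) * (Complex.I * 1)) x := by
    intro x
    have h1 : HasDerivAt (fun u : ℝ => ((u : ℝ) : ℂ)) 1 x := (hasDerivAt_id x).ofReal_comp
    exact (h1.const_mul Complex.I).cexp
  have hbound : ∀ x ∈ (Set.univ : Set ℝ),
      ‖Complex.exp (Complex.I * x) * (Complex.I * 1)‖ ≤ 1 := by
    intro x _
    rw [norm_mul]
    simp [Complex.norm_exp]
  have := (convex_univ : Convex ℝ (Set.univ : Set ℝ)).norm_image_sub_le_of_norm_hasDerivWithin_le
    (fun x _ => (hder x).hasDerivWithinAt) hbound (Set.mem_univ t) (Set.mem_univ s)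
  simpa [Real.norm_eq_abs] using this

lemma my_tendsto_zero_atTop (f : ℝ → ℂ) (hf : Integrable f)
    (hdiff : Differentiable ℝ f) (hf' : Integrable (deriv f)) :
    Tendsto f atTop (𝓝 0) := by
  have hder : ∀ x ∈ Ioi (0:ℝ), HasDerivAt f (deriv f x) x := fun x _ => (hdiff x).hasDerivAt
  have h := tendsto_limUnder_of_hasDerivAt_of_integrableOn_Ioi hder hf'.integrableOn
  have hlim : limUnder atTop f = 0 := by
    refine IntegrableAtFilter.eq_zero_of_tendsto ⟨Ioi 0, Ioi_mem_atTop 0, hf.integrableOn⟩ ?_ h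
    intro s hs
    rcases mem_atTop_sets.1 hs with ⟨b, hb⟩
    rw [← top_le_iff, ← Real.volume_Ici (a := b)]
    exact measure_mono hb
  rwa [hlim] at h

lemma my_tendsto_zero_atBot (f : ℝ → ℂ) (hf : Integrable f)
    (hdiff : Differentiable ℝ f) (hf' : Integrable (deriv f)) :
    Tendsto f atBot (𝓝 0) := by
  have hder : ∀ x ∈ Iic (0:ℝ), HasDerivAt f (deriv f x) x := fun x _ => (hdiff x).hasDerivAt
  have h := tendsto_limUnder_of_hasDerivAt_of_integrableOn_Iic hder hf'.integrableOn
  have hlim : limUnder atBot f = 0 := by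
    refine IntegrableAtFilter.eq_zero_of_tendsto ⟨Iic 0, Iic_mem_atBot 0, hf.integrableOn⟩ ?_ h
    intro s hs
    rcases mem_atBot_sets.1 hs with ⟨b, hb⟩
    rw [← top_le_iff, ← Real.volume_Iic (a := b)]
    exact measure_mono hb
  rwa [hlim] at h

lemma my_hasDerivAt_xT (y : ℝ) : HasDerivAt xT (Real.exp (-y)) y := by
  have h : HasDerivAt (fun y : ℝ => Real.exp (-y)) (Real.exp (-y) * (-1)) y :=
    (hasDerivAt_neg y).exp
  have h2 := h.neg
  simp only [mul_neg, mul_one, neg_neg] at h2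
  exact h2

lemma my_hasDerivAt_xC (y : ℝ) :
    HasDerivAt xC (Real.exp (-y) / (1 + Real.exp (-y))) y := by
  have h1 : HasDerivAt (fun y : ℝ => 1 + Real.exp (-y)) (Real.exp (-y) * (-1)) y :=
    ((hasDerivAt_neg y).exp).const_add 1
  have h2 := (h1.log (by positivity)).neg
  have heq : Real.exp (-y) / (1 + Real.exp (-y)) = -(Real.exp (-y) * (-1) / (1 + Real.exp (-y))) := by
    ring
  rw [heq]
  exact h2

lemma my_norm_one (k r : ℝ) : ‖Complex.exp (Complex.I * (k:ℂ) * (r:ℂ))‖ = 1 := by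
  simp [Complex.norm_exp, Complex.mul_re, Complex.mul_im]

lemma my_hasDerivAt_E (x : ℝ → ℝ) (x' k y : ℝ) (hx : HasDerivAt x x' y) :
    HasDerivAt (fun y : ℝ => Complex.exp (Complex.I * (k:ℂ) * (x y : ℂ)))
      (Complex.exp (Complex.I * (k:ℂ) * (x y : ℂ)) * (Complex.I * (k:ℂ) * (x' : ℂ))) y := by
  exact ((hx.ofReal_comp).const_mul (Complex.I * (k:ℂ))).cexp

lemma my_hasDerivAt_W (k y : ℝ) :
    HasDerivAt (fun y : ℝ => ((1:ℂ) + (Real.exp y : ℂ)) * Complex.exp (Complex.I * (k:ℂ) * (xC y : ℂ))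
        - (Real.exp y : ℂ) * Complex.exp (Complex.I * (k:ℂ) * (xT y : ℂ)))
      (((Real.exp y : ℂ) + Complex.I * (k:ℂ)) *
        (Complex.exp (Complex.I * (k:ℂ) * (xC y : ℂ)) - Complex.exp (Complex.I * (k:ℂ) * (xT y : ℂ)))) y := by
  have hc : HasDerivAt (fun y : ℝ => ((1:ℂ) + (Real.exp y : ℂ))) (Real.exp y : ℂ) y := by
    have := ((Real.hasDerivAt_exp y).ofReal_comp).const_add (1:ℂ)
    simpa using this
  have he : HasDerivAt (fun y : ℝ => ((Real.exp y : ℝ) : ℂ)) (Real.exp y : ℂ) y :=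
    (Real.hasDerivAt_exp y).ofReal_comp
  have hEC := my_hasDerivAt_E xC (Real.exp (-y) / (1 + Real.exp (-y))) k y (my_hasDerivAt_xC y)
  have hET := my_hasDerivAt_E xT (Real.exp (-y)) k y (my_hasDerivAt_xT y)
  have h := (hc.mul hEC).sub (he.mul hET)
  refine h.congr_deriv (Eq.symm ?_)
  have r1 : (1 + Real.exp y) * (Real.exp (-y) / (1 + Real.exp (-y))) = 1 := by
    rw [Real.exp_neg]
    have h0 := Real.exp_ne_zero y
    have h1 : (0:ℝ) < 1 + (Real.exp y)⁻¹ := by positivity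
    field_simp
    ring
  have r2 : Real.exp y * Real.exp (-y) = 1 := by rw [← Real.exp_add]; simp
  have c1 : ((1:ℂ) + (Real.exp y : ℂ)) * ((Real.exp (-y) / (1 + Real.exp (-y)) : ℝ) : ℂ) = 1 := by
    exact_mod_cast r1
  have c2 : ((Real.exp y : ℝ) : ℂ) * ((Real.exp (-y) : ℝ) : ℂ) = 1 := by
    exact_mod_cast r2
  linear_combination (-(Complex.I * (k:ℂ) * Complex.exp (Complex.I * (k:ℂ) * ((xC y : ℝ):ℂ)))) * c1 +
    (Complex.I * (k:ℂ) * Complex.exp (Complex.I * (k:ℂ) * ((xT y : ℝ):ℂ))) * c2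

/-- The quadratic smallness of the difference of phases. -/
lemma my_norm_D_le_quad (k y : ℝ) (hk : 0 ≤ k) :
    ‖Complex.exp (Complex.I * (k:ℂ) * (xC y : ℂ)) - Complex.exp (Complex.I * (k:ℂ) * (xT y : ℂ))‖
      ≤ k * Real.exp (-y) ^ 2 / 2 := by
  have hc1 : Complex.I * (k:ℂ) * ((xC y : ℝ):ℂ) = Complex.I * ((k * xC y : ℝ):ℂ) := by
    push_cast; ring
  have hc2 : Complex.I * (k:ℂ) * ((xT y : ℝ):ℂ) = Complex.I * ((k * xT y : ℝ):ℂ) := by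
    push_cast; ring
  rw [hc1, hc2]
  refine le_trans (my_norm_expI_sub _ _) ?_
  set u := Real.exp (-y) with hu_def
  have hu : 0 ≤ u := (Real.exp_pos _).le
  have hlog1 : Real.log (1 + u) ≤ u := by
    have := Real.log_le_sub_one_of_pos (show (0:ℝ) < 1 + u by positivity)
    linarith
  have hlog2 : u - u ^ 2 / 2 ≤ Real.log (1 + u) := my_quad_log u hu
  have hxx : k * xC y - k * xT y = k * (u - Real.log (1 + u)) := by
    simp only [xC, xT, ← hu_def]; ring
  rw [hxx, abs_of_nonneg (by nlinarith)]
  nlinarith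

lemma my_norm_D_le_two (k y : ℝ) :
    ‖Complex.exp (Complex.I * (k:ℂ) * (xC y : ℂ)) - Complex.exp (Complex.I * (k:ℂ) * (xT y : ℂ))‖
      ≤ 2 := by
  refine le_trans (norm_sub_le _ _) ?_
  rw [my_norm_one, my_norm_one]
  norm_num

/-- The key `√k` bound: `e^y ‖Δ(y)‖ ≤ √k`. -/
lemma my_norm_D_sqrt (k y : ℝ) (hk : 0 ≤ k) :
    Real.exp y *
      ‖Complex.exp (Complex.I * (k:ℂ) * (xC y : ℂ)) - Complex.exp (Complex.I * (k:ℂ) * (xT y : ℂ))‖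
      ≤ Real.sqrt k := by
  set N := ‖Complex.exp (Complex.I * (k:ℂ) * (xC y : ℂ)) -
      Complex.exp (Complex.I * (k:ℂ) * (xT y : ℂ))‖ with hN_def
  have hN0 : 0 ≤ N := norm_nonneg _
  have hN2 : N ≤ 2 := my_norm_D_le_two k y
  have hNq : N ≤ k * Real.exp (-y) ^ 2 / 2 := my_norm_D_le_quad k y hk
  have he : Real.exp y * Real.exp (-y) = 1 := by rw [← Real.exp_add]; simp
  have hey : 0 < Real.exp y := Real.exp_pos y
  rw [show Real.sqrt k = Real.sqrt k from rfl]
  have hsq : (Real.exp y * N) ^ 2 ≤ k := by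
    have hNN : N * N ≤ 2 * (k * Real.exp (-y) ^ 2 / 2) :=
      mul_le_mul hN2 hNq hN0 (by norm_num)
    have h4 : (Real.exp y * Real.exp y) * (N * N)
        ≤ (Real.exp y * Real.exp y) * (2 * (k * Real.exp (-y) ^ 2 / 2)) :=
      mul_le_mul_of_nonneg_left hNN (by positivity)
    have h5 : (Real.exp y * Real.exp y) * (2 * (k * Real.exp (-y) ^ 2 / 2))
        = k * (Real.exp y * Real.exp (-y)) ^ 2 := by ring
    calc (Real.exp y * N) ^ 2 = (Real.exp y * Real.exp y) * (N * N) := by ring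
      _ ≤ k * (Real.exp y * Real.exp (-y)) ^ 2 := by rw [← h5]; exact h4
      _ = k := by rw [he]; ring
  exact (Real.le_sqrt (by positivity) hk).mpr hsq

/-- the bound of Lemma `lemma:AN**` of the paper on the
difference between the CGHS and thermal incoming Fourier transforms. -/
theorem stmt_10 (f : ℝ → ℂ) (hf : Integrable f)
    (hdiff : Differentiable ℝ f) (hf' : Integrable (deriv f))
    (y₀ k : ℝ) (hk : 0 < k) :
    Real.sqrt (2 * π) * ‖FcheckX xC (transl f y₀) k - FcheckX xT (transl f y₀) k‖ ≤
      (1 / Real.sqrt k + 1 / k) * ((∫ y : ℝ, ‖f y‖) + (∫ y : ℝ, ‖deriv f y‖)) := by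
  classical
  set A := ∫ y : ℝ, ‖f y‖ with hA_def
  set B := ∫ y : ℝ, ‖deriv f y‖ with hB_def
  have hA0 : 0 ≤ A := integral_nonneg fun y => norm_nonneg _
  have hB0 : 0 ≤ B := integral_nonneg fun y => norm_nonneg _
  set EC : ℝ → ℂ := fun y => Complex.exp (Complex.I * (k:ℂ) * (xC y : ℂ)) with hEC_def
  set ET : ℝ → ℂ := fun y => Complex.exp (Complex.I * (k:ℂ) * (xT y : ℂ)) with hET_def
  set W : ℝ → ℂ := fun y => ((1:ℂ) + (Real.exp y : ℂ)) * EC y - (Real.exp y : ℂ) * ET y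
    with hW_def
  -- basic integrability
  have hgInt : Integrable (fun y : ℝ => f (y - y₀)) := hf.comp_sub_right y₀
  have hg'Int : Integrable (fun y : ℝ => deriv f (y - y₀)) := hf'.comp_sub_right y₀
  -- continuity
  have hcxC : Continuous xC := by
    have h : Continuous fun y : ℝ => 1 + Real.exp (-y) := by continuity
    exact (h.log (fun y => by positivity)).neg
  have hcxT : Continuous xT := by
    unfold xT; continuity
  have hcEC : Continuous EC :=
    Complex.continuous_exp.comp (continuous_const.mul (Complex.continuous_ofReal.comp hcxC))
  have hcET : Continuous ET :=
    Complex.continuous_exp.comp (continuous_const.mul (Complex.continuous_ofReal.comp hcxT))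
  have hcW : Continuous W := by
    exact ((continuous_const.add (Complex.continuous_ofReal.comp Real.continuous_exp)).mul hcEC).sub
      ((Complex.continuous_ofReal.comp Real.continuous_exp).mul hcET)
  -- norm facts
  have hnec : ∀ y : ℝ, ‖EC y‖ = 1 := fun y => my_norm_one k (xC y)
  have hnet : ∀ y : ℝ, ‖ET y‖ = 1 := fun y => my_norm_one k (xT y)
  have hexpnorm : ∀ y : ℝ, ‖((Real.exp y : ℝ) : ℂ)‖ = Real.exp y := by
    intro y
    simp [abs_of_pos (Real.exp_pos y)]
  have hWb : ∀ y : ℝ, ‖W y‖ ≤ 1 + Real.sqrt k := by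
    intro y
    have hw : W y = EC y + (Real.exp y : ℂ) * (EC y - ET y) := by rw [hW_def]; ring
    rw [hw]
    refine le_trans (norm_add_le _ _) ?_
    rw [norm_mul, hnec y, hexpnorm y]
    exact add_le_add le_rfl (my_norm_D_sqrt k y hk.le)
  have heDb : ∀ y : ℝ, ‖(Real.exp y : ℂ) * (EC y - ET y)‖ ≤ Real.sqrt k := by
    intro y
    rw [norm_mul, hexpnorm y]
    exact my_norm_D_sqrt k y hk.le
  have hDb : ∀ y : ℝ, ‖EC y - ET y‖ ≤ 2 := fun y => my_norm_D_le_two k y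
  -- integrability of the pieces
  have hIntgEC : Integrable (fun y : ℝ => f (y - y₀) * EC y) := by
    have h := hgInt.bdd_mul hcEC.aestronglyMeasurable (ae_of_all _ fun y => le_of_eq (hnec y))
    simpa [mul_comm] using h
  have hIntgET : Integrable (fun y : ℝ => f (y - y₀) * ET y) := by
    have h := hgInt.bdd_mul hcET.aestronglyMeasurable (ae_of_all _ fun y => le_of_eq (hnet y))
    simpa [mul_comm] using h
  have hInt_t3 : Integrable (fun y : ℝ => f (y - y₀) * (EC y - ET y)) := by
    refine (hIntgEC.sub hIntgET).congr (ae_of_all _ fun y => ?_)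
    simp only [Pi.sub_apply]
    ring
  have hInt_t1 : Integrable (fun y : ℝ => deriv f (y - y₀) * W y) := by
    have h := hg'Int.bdd_mul hcW.aestronglyMeasurable (ae_of_all _ hWb)
    simpa [mul_comm] using h
  have hInt_t2 : Integrable (fun y : ℝ => f (y - y₀) * ((Real.exp y : ℂ) * (EC y - ET y))) := by
    have hcb : Continuous fun y : ℝ => (Real.exp y : ℂ) * (EC y - ET y) :=
      (Complex.continuous_ofReal.comp Real.continuous_exp).mul (hcEC.sub hcET)
    have h := hgInt.bdd_mul hcb.aestronglyMeasurable (ae_of_all _ heDb)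
    simpa [mul_comm] using h
  have hφInt : Integrable (fun y : ℝ => deriv f (y - y₀) * W y
      + f (y - y₀) * ((Real.exp y : ℂ) * (EC y - ET y))
      + (Complex.I * (k:ℂ)) * (f (y - y₀) * (EC y - ET y))) :=
    (hInt_t1.add hInt_t2).add (hInt_t3.const_mul _)
  -- derivative of Φ
  have hgd : ∀ y : ℝ, HasDerivAt (fun z : ℝ => f (z - y₀)) (deriv f (y - y₀)) y := by
    intro y
    have h2 : HasDerivAt (fun z : ℝ => z - y₀) 1 y := (hasDerivAt_id y).sub_const y₀
    have h3 := ((hdiff (y - y₀)).hasDerivAt).scomp y h2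
    rw [one_smul] at h3
    exact h3
  have hΦ : ∀ y : ℝ, HasDerivAt (fun z : ℝ => f (z - y₀) * W z)
      (deriv f (y - y₀) * W y + f (y - y₀) * ((Real.exp y : ℂ) * (EC y - ET y))
        + (Complex.I * (k:ℂ)) * (f (y - y₀) * (EC y - ET y))) y := by
    intro y
    have h := (hgd y).mul (my_hasDerivAt_W k y)
    refine h.congr_deriv (Eq.symm ?_)
    rw [hW_def, hEC_def, hET_def]
    ring
  -- limits of Φ at ±∞
  have hmaptop : Tendsto (fun y : ℝ => y - y₀) atTop atTop := by
    simpa [sub_eq_add_neg] using tendsto_atTop_add_const_right atTop (-y₀) (tendsto_id (α := ℝ))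
  have hmapbot : Tendsto (fun y : ℝ => y - y₀) atBot atBot := by
    simpa [sub_eq_add_neg] using tendsto_atBot_add_const_right atBot (-y₀) (tendsto_id (α := ℝ))
  have hgtop : Tendsto (fun y : ℝ => f (y - y₀)) atTop (𝓝 0) :=
    (my_tendsto_zero_atTop f hf hdiff hf').comp hmaptop
  have hgbot : Tendsto (fun y : ℝ => f (y - y₀)) atBot (𝓝 0) :=
    (my_tendsto_zero_atBot f hf hdiff hf').comp hmapbot
  have hΦtop : Tendsto (fun y : ℝ => f (y - y₀) * W y) atTop (𝓝 0) := by
    refine squeeze_zero_norm (a := fun y : ℝ => (1 + Real.sqrt k) * ‖f (y - y₀)‖) (fun y => ?_) ?_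
    · show ‖f (y - y₀) * W y‖ ≤ (1 + Real.sqrt k) * ‖f (y - y₀)‖
      rw [norm_mul, mul_comm]
      exact mul_le_mul_of_nonneg_right (hWb y) (norm_nonneg _)
    · simpa using (hgtop.norm).const_mul (1 + Real.sqrt k)
  have hΦbot : Tendsto (fun y : ℝ => f (y - y₀) * W y) atBot (𝓝 0) := by
    refine squeeze_zero_norm (a := fun y : ℝ => (1 + Real.sqrt k) * ‖f (y - y₀)‖) (fun y => ?_) ?_
    · show ‖f (y - y₀) * W y‖ ≤ (1 + Real.sqrt k) * ‖f (y - y₀)‖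
      rw [norm_mul, mul_comm]
      exact mul_le_mul_of_nonneg_right (hWb y) (norm_nonneg _)
    · simpa using (hgbot.norm).const_mul (1 + Real.sqrt k)
  -- FTC on the whole line
  have hkey : (∫ y : ℝ, (deriv f (y - y₀) * W y
      + f (y - y₀) * ((Real.exp y : ℂ) * (EC y - ET y))
      + (Complex.I * (k:ℂ)) * (f (y - y₀) * (EC y - ET y)))) = 0 := by
    have h1 := intervalIntegral_tendsto_integral hφInt
      (tendsto_neg_atTop_atBot (G := ℝ)) (tendsto_id (α := ℝ))
    have h2 : ∀ R : ℝ, (∫ y in (-R)..R, (deriv f (y - y₀) * W y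
        + f (y - y₀) * ((Real.exp y : ℂ) * (EC y - ET y))
        + (Complex.I * (k:ℂ)) * (f (y - y₀) * (EC y - ET y))))
        = f (R - y₀) * W R - f (-R - y₀) * W (-R) := by
      intro R
      exact intervalIntegral.integral_eq_sub_of_hasDerivAt (fun x _ => hΦ x)
        hφInt.intervalIntegrable
    have h3 : Tendsto (fun R : ℝ => f (R - y₀) * W R - f (-R - y₀) * W (-R)) atTop
        (𝓝 (0 - 0)) :=
      hΦtop.sub (hΦbot.comp (tendsto_neg_atTop_atBot (G := ℝ)))
    have h4 : Tendsto (fun R : ℝ => (∫ y in (-R)..R, (deriv f (y - y₀) * W y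
        + f (y - y₀) * ((Real.exp y : ℂ) * (EC y - ET y))
        + (Complex.I * (k:ℂ)) * (f (y - y₀) * (EC y - ET y))))) atTop (𝓝 (0 - 0)) :=
      h3.congr fun R => (h2 R).symm
    have h5 := tendsto_nhds_unique h1 h4
    simpa using h5
  -- split the integral
  have hsplit : (∫ y : ℝ, (deriv f (y - y₀) * W y
      + f (y - y₀) * ((Real.exp y : ℂ) * (EC y - ET y))
      + (Complex.I * (k:ℂ)) * (f (y - y₀) * (EC y - ET y))))
      = (∫ y : ℝ, deriv f (y - y₀) * W y)
        + (∫ y : ℝ, f (y - y₀) * ((Real.exp y : ℂ) * (EC y - ET y)))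
        + (Complex.I * (k:ℂ)) * (∫ y : ℝ, f (y - y₀) * (EC y - ET y)) := by
    have h12 : Integrable (fun y : ℝ => deriv f (y - y₀) * W y
        + f (y - y₀) * ((Real.exp y : ℂ) * (EC y - ET y))) := hInt_t1.add hInt_t2
    have h3 : Integrable (fun y : ℝ => (Complex.I * (k:ℂ)) * (f (y - y₀) * (EC y - ET y))) :=
      hInt_t3.const_mul _
    rw [integral_add h12 h3, integral_add hInt_t1 hInt_t2, integral_const_mul]
  have h0 : (∫ y : ℝ, deriv f (y - y₀) * W y)
      + (∫ y : ℝ, f (y - y₀) * ((Real.exp y : ℂ) * (EC y - ET y)))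
      + (Complex.I * (k:ℂ)) * (∫ y : ℝ, f (y - y₀) * (EC y - ET y)) = 0 := by
    rw [← hsplit]; exact hkey
  -- norm bounds on the two explicit integrals
  have hb1 : ‖∫ y : ℝ, deriv f (y - y₀) * W y‖ ≤ (1 + Real.sqrt k) * B := by
    have h1 : ‖∫ y : ℝ, deriv f (y - y₀) * W y‖
        ≤ ∫ y : ℝ, (1 + Real.sqrt k) * ‖deriv f (y - y₀)‖ := by
      refine norm_integral_le_of_norm_le (hg'Int.norm.const_mul _) (ae_of_all _ fun y => ?_)
      rw [norm_mul, mul_comm]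
      exact mul_le_mul_of_nonneg_right (hWb y) (norm_nonneg _)
    refine le_trans h1 (le_of_eq ?_)
    rw [integral_const_mul]
    congr 1
    rw [hB_def]
    exact integral_sub_right_eq_self (fun y => ‖deriv f y‖) y₀
  have hb2 : ‖∫ y : ℝ, f (y - y₀) * ((Real.exp y : ℂ) * (EC y - ET y))‖ ≤ Real.sqrt k * A := by
    have h1 : ‖∫ y : ℝ, f (y - y₀) * ((Real.exp y : ℂ) * (EC y - ET y))‖
        ≤ ∫ y : ℝ, Real.sqrt k * ‖f (y - y₀)‖ := by
      refine norm_integral_le_of_norm_le (hgInt.norm.const_mul _) (ae_of_all _ fun y => ?_)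
      rw [norm_mul, mul_comm]
      exact mul_le_mul_of_nonneg_right (heDb y) (norm_nonneg _)
    refine le_trans h1 (le_of_eq ?_)
    rw [integral_const_mul]
    congr 1
    rw [hA_def]
    exact integral_sub_right_eq_self (fun y => ‖f y‖) y₀
  -- main estimate
  have hnormIk : ‖Complex.I * (k:ℂ)‖ = k := by
    simp [map_mul, abs_of_pos hk]
  have hmain : k * ‖∫ y : ℝ, f (y - y₀) * (EC y - ET y)‖
      ≤ (1 + Real.sqrt k) * B + Real.sqrt k * A := by
    calc k * ‖∫ y : ℝ, f (y - y₀) * (EC y - ET y)‖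
        = ‖(Complex.I * (k:ℂ)) * ∫ y : ℝ, f (y - y₀) * (EC y - ET y)‖ := by
          rw [norm_mul, hnormIk]
      _ = ‖(∫ y : ℝ, deriv f (y - y₀) * W y)
          + (∫ y : ℝ, f (y - y₀) * ((Real.exp y : ℂ) * (EC y - ET y)))‖ := by
          rw [show (Complex.I * (k:ℂ)) * ∫ y : ℝ, f (y - y₀) * (EC y - ET y)
            = -((∫ y : ℝ, deriv f (y - y₀) * W y)
              + (∫ y : ℝ, f (y - y₀) * ((Real.exp y : ℂ) * (EC y - ET y)))) from by
            linear_combination h0]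
          rw [norm_neg]
      _ ≤ ‖∫ y : ℝ, deriv f (y - y₀) * W y‖
          + ‖∫ y : ℝ, f (y - y₀) * ((Real.exp y : ℂ) * (EC y - ET y))‖ := norm_add_le _ _
      _ ≤ (1 + Real.sqrt k) * B + Real.sqrt k * A := add_le_add hb1 hb2
  -- rewrite the goal
  have hsqrt2pi : (0:ℝ) < Real.sqrt (2 * π) := Real.sqrt_pos.mpr (by positivity)
  have hδ : FcheckX xC (transl f y₀) k - FcheckX xT (transl f y₀) k
      = ((Real.sqrt (2 * π) : ℝ) : ℂ)⁻¹ * ∫ y : ℝ, f (y - y₀) * (EC y - ET y) := by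
    unfold FcheckX transl
    rw [← mul_sub, ← integral_sub hIntgEC hIntgET]
    congr 1
    refine integral_congr_ae (ae_of_all _ fun y => ?_)
    rw [hEC_def, hET_def]
    ring
  rw [hδ, norm_mul]
  have hninv : ‖((Real.sqrt (2 * π) : ℝ) : ℂ)⁻¹‖ = (Real.sqrt (2 * π))⁻¹ := by
    rw [norm_inv, Complex.norm_real, Real.norm_eq_abs, abs_of_pos hsqrt2pi]
  rw [hninv, ← mul_assoc, mul_inv_cancel₀ (ne_of_gt hsqrt2pi), one_mul]
  -- final arithmetic
  have hsk : 0 < Real.sqrt k := Real.sqrt_pos.mpr hk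
  have hkk : Real.sqrt k * Real.sqrt k = k := Real.mul_self_sqrt hk.le
  rw [← mul_le_mul_iff_of_pos_left hk]
  refine le_trans hmain ?_
  have e1 : k * (1 / Real.sqrt k) = Real.sqrt k := by
    rw [mul_one_div, ← hkk]
    field_simp
    rw [Real.sqrt_sq hsk.le]
  have e2 : k * (1 / k) = 1 := by field_simp
  calc (1 + Real.sqrt k) * B + Real.sqrt k * A
      ≤ Real.sqrt k * (A + B) + 1 * (A + B) := by nlinarith [hA0, hB0]
    _ = (k * (1 / Real.sqrt k)) * (A + B) + (k * (1 / k)) * (A + B) := by rw [e1, e2]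
    _ = k * ((1 / Real.sqrt k + 1 / k) * (A + B)) := by ring

end
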